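/- Let x, ξ : ℝ≥0 → ℝⁿ be differentiable and θ, ν : ℝ≥0 → ℝᵈ be differentiable, H = Hᵀ > 0, and suppose: θ' = S(θ), x' − ξ' = −λ(t)(x−ξ) + B(t)(θ−ν), ν' = S(ν) + H⁻¹ B(t)ᵀ(x−ξ), where S : ℝᵈ → ℝᵈ is C¹ with H·DS(z)+DS(z)ᵀH ≤ 0 for all z, B : ℝ≥0 → ℝ^{n×d} is continuous, and λ : ℝ≥0 → ℝ is continuous with λ(t) ≥ 1 for all t. Then V(t) = (1/2)‖x(t)−ξ(t)‖² + (1/2)(θ(t)−ν(t))ᵀH(θ(t)−ν(t)) is nonincreasing, t ↦ √(λ(t))‖x(t)−ξ(t)‖ belongs to L², and in particular x − ξ ∈ L². -/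

import Mathlib

/-!
`V = ½‖x − ξ‖² + ½ (θ − ν)ᵀ H (θ − ν)` is a Lyapunov function. Along solutions the cross terms
`(x − ξ)ᵀ B (θ − ν)` coming from the two equations cancel, because the correction `H⁻¹ Bᵀ (x − ξ)`
in `ν'` is turned back into `Bᵀ (x − ξ)` by `H`; what is left is
`V' = −λ ‖x − ξ‖² + (θ − ν)ᵀ H (S θ − S ν)`. The last term is `≤ 0` since the `H`-symmetrised
Jacobian of `S` is negative semidefinite, by the mean value theorem on the segment `[ν, θ]`.
So `V` is nonincreasing and `∫₀ᵀ λ ‖x − ξ‖² ≤ V 0 − V T ≤ V 0` for every `T`; finally `λ ≥ 1`.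
-/

open MeasureTheory Set Matrix

def esq {n : ℕ} (v : Fin n → ℝ) : ℝ := ∑ i, (v i) ^ 2

noncomputable def jac {d : ℕ} (S : (Fin d → ℝ) → (Fin d → ℝ)) (z : Fin d → ℝ) :
    Matrix (Fin d) (Fin d) ℝ :=
  Matrix.of fun i j => fderiv ℝ S z (Pi.single j 1) i

lemma esq_eq_dotProduct {n : ℕ} (v : Fin n → ℝ) : esq v = v ⬝ᵥ v := by
  simp only [esq, dotProduct, sq]

lemma esq_nonneg {n : ℕ} (v : Fin n → ℝ) : 0 ≤ esq v :=
  Finset.sum_nonneg fun _ _ => sq_nonneg _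

lemma jac_mulVec {d : ℕ} (S : (Fin d → ℝ) → (Fin d → ℝ)) (z v : Fin d → ℝ) :
    jac S z *ᵥ v = fderiv ℝ S z v := by
  have hjac : jac S z = LinearMap.toMatrix' (fderiv ℝ S z : (Fin d → ℝ) →ₗ[ℝ] Fin d → ℝ) := by
    ext; rfl
  rw [hjac, LinearMap.toMatrix'_mulVec]
  rfl

namespace Matrix

variable {ι : Type*} [Fintype ι]

lemma IsSymm.dotProduct_mulVec_comm {H : Matrix ι ι ℝ} (hH : H.IsSymm) (u v : ι → ℝ) :
    u ⬝ᵥ H *ᵥ v = v ⬝ᵥ H *ᵥ u := by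
  simpa only [hH.eq] using dotProduct_transpose_mulVec H u v

lemma dotProduct_mulVec_mulVec_nonpos {H M : Matrix ι ι ℝ} (hH : H.IsSymm)
    (hM : (-(H * M + Mᵀ * H)).PosSemidef) (w : ι → ℝ) :
    w ⬝ᵥ H *ᵥ (M *ᵥ w) ≤ 0 := by
  have h := hM.dotProduct_mulVec_nonneg w
  have hsym : w ⬝ᵥ Mᵀ *ᵥ (H *ᵥ w) = w ⬝ᵥ H *ᵥ (M *ᵥ w) := by
    rw [dotProduct_transpose_mulVec, dotProduct_comm, hH.dotProduct_mulVec_comm]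
  simp only [star_trivial, neg_mulVec, add_mulVec, dotProduct_neg, dotProduct_add,
    ← mulVec_mulVec, hsym] at h
  linarith

end Matrix

section Derivatives

variable {ι κ : Type*} [Fintype ι] [Fintype κ] {t : ℝ}

lemma HasDerivAt.dotProduct {u v : ℝ → ι → ℝ} {u' v' : ι → ℝ}
    (hu : HasDerivAt u u' t) (hv : HasDerivAt v v' t) :
    HasDerivAt (fun s => u s ⬝ᵥ v s) (u' ⬝ᵥ v t + u t ⬝ᵥ v') t := by
  have h := HasDerivAt.fun_sum (u := Finset.univ)
    fun i _ => (hasDerivAt_pi.1 hu i).fun_mul (hasDerivAt_pi.1 hv i)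
  rwa [Finset.sum_add_distrib] at h

lemma HasDerivAt.mulVec (A : Matrix κ ι ℝ) {v : ℝ → ι → ℝ} {v' : ι → ℝ}
    (hv : HasDerivAt v v' t) : HasDerivAt (fun s => A *ᵥ v s) (A *ᵥ v') t :=
  (A.mulVecLin.toContinuousLinearMap).hasFDerivAt.comp_hasDerivAt t hv

lemma HasDerivAt.dotProduct_mulVec_self {H : Matrix ι ι ℝ} (hH : H.IsSymm)
    {u : ℝ → ι → ℝ} {u' : ι → ℝ} (hu : HasDerivAt u u' t) :
    HasDerivAt (fun s => u s ⬝ᵥ H *ᵥ u s) (2 * (u t ⬝ᵥ H *ᵥ u')) t := by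
  convert hu.dotProduct (hu.mulVec H) using 1
  rw [hH.dotProduct_mulVec_comm u']
  ring

end Derivatives

lemma sub_dotProduct_mulVec_map_sub_nonpos {d : ℕ} {H : Matrix (Fin d) (Fin d) ℝ}
    (hH : H.IsSymm) {S : (Fin d → ℝ) → (Fin d → ℝ)} (hS : Differentiable ℝ S)
    (hdiss : ∀ z, (-(H * jac S z + (jac S z)ᵀ * H)).PosSemidef) (a b : Fin d → ℝ) :
    (a - b) ⬝ᵥ H *ᵥ (S a - S b) ≤ 0 := by
  set v := a - b
  have hseg : ∀ s : ℝ, HasDerivAt (fun r : ℝ => b + r • v) v s := fun s => by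
    simpa using ((hasDerivAt_id s).smul_const v).const_add b
  have hg : ∀ s : ℝ, HasDerivAt (fun r : ℝ => v ⬝ᵥ H *ᵥ S (b + r • v))
      (v ⬝ᵥ H *ᵥ (jac S (b + s • v) *ᵥ v)) s := fun s => by
    have hSseg := (hS (b + s • v)).hasFDerivAt.comp_hasDerivAt s (hseg s)
    rw [← jac_mulVec] at hSseg
    simpa using (hasDerivAt_const s v).dotProduct (hSseg.mulVec H)
  have hanti := antitone_of_hasDerivAt_nonpos hg
    fun s => dotProduct_mulVec_mulVec_nonpos hH (hdiss _) v
  have h10 := hanti zero_le_one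
  simp only [zero_smul, add_zero, one_smul, v, add_sub_cancel] at h10
  rw [mulVec_sub, dotProduct_sub]
  linarith

lemma hasDerivAt_lyapunov {n d : ℕ} {H : Matrix (Fin d) (Fin d) ℝ} (hH : H.IsSymm)
    (hHdet : IsUnit H.det) {B : Matrix (Fin n) (Fin d) ℝ} {l t : ℝ} {s : Fin d → ℝ}
    {e : ℝ → Fin n → ℝ} {w : ℝ → Fin d → ℝ}
    (he : HasDerivAt e (-l • e t + B *ᵥ w t) t)
    (hw : HasDerivAt w (s - H⁻¹ *ᵥ (Bᵀ *ᵥ e t)) t) :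
    HasDerivAt (fun r => 1 / 2 * esq (e r) + 1 / 2 * (w r ⬝ᵥ H *ᵥ w r))
      (-l * esq (e t) + w t ⬝ᵥ H *ᵥ s) t := by
  have hcancel : w t ⬝ᵥ H *ᵥ (H⁻¹ *ᵥ (Bᵀ *ᵥ e t)) = e t ⬝ᵥ B *ᵥ w t := by
    rw [mulVec_mulVec, mul_nonsing_inv _ hHdet, one_mulVec, dotProduct_transpose_mulVec]
  have he' := (he.dotProduct_mulVec_self (isSymm_one (n := Fin n))).const_mul (1 / 2)
  have hw' := (hw.dotProduct_mulVec_self hH).const_mul (1 / 2)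
  simp only [one_mulVec, ← esq_eq_dotProduct] at he'
  refine (he'.add hw').congr_deriv ?_
  rw [mulVec_sub, dotProduct_sub, hcancel, dotProduct_add, dotProduct_smul, smul_eq_mul,
    esq_eq_dotProduct]
  ring

lemma integrableOn_Ici_of_le_neg_deriv {V V' f : ℝ → ℝ} {a : ℝ}
    (hV : ∀ t ∈ Ici a, HasDerivAt V (V' t) t) (hV0 : ∀ t ∈ Ici a, 0 ≤ V t)
    (hf : ContinuousOn f (Ici a)) (hf0 : ∀ t ∈ Ici a, 0 ≤ f t)
    (hfV : ∀ t ∈ Ici a, f t ≤ -V' t) : IntegrableOn f (Ici a) := by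
  rw [integrableOn_Ici_iff_integrableOn_Ioi]
  refine integrableOn_Ioi_of_intervalIntegral_norm_bounded (V a) a
    (fun T => ((hf.mono Icc_subset_Ici_self).integrableOn_Icc).mono_set Ioc_subset_Icc_self)
    Filter.tendsto_id ?_
  filter_upwards [Filter.eventually_ge_atTop a] with T hT
  have hIcc : Icc a T ⊆ Ici a := Icc_subset_Ici_self
  have hftc : (∫ t in a..T, f t) ≤ -V T - -V a :=
    intervalIntegral.integral_le_sub_of_hasDeriv_right_of_le hT
      (fun t ht => (hV t (hIcc ht)).continuousAt.continuousWithinAt.neg)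
      (fun t ht => (hV t (hIcc (Ioo_subset_Icc_self ht))).neg.hasDerivWithinAt)
      ((hf.mono hIcc).integrableOn_Icc)
      (fun t ht => hfV t (hIcc (Ioo_subset_Icc_self ht)))
  have hnorm : (∫ t in a..T, ‖f t‖) = ∫ t in a..T, f t :=
    intervalIntegral.integral_congr fun t ht =>
      Real.norm_of_nonneg (hf0 t (hIcc (by rwa [uIcc_of_le hT] at ht)))
  rw [id, hnorm]
  linarith [hV0 T hT]

theorem embedding_estimate_general {n d : ℕ}
    (H : Matrix (Fin d) (Fin d) ℝ) (hHsymm : H.IsSymm) (hHpos : H.PosDef)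
    (S : (Fin d → ℝ) → (Fin d → ℝ)) (hS : ContDiff ℝ 1 S)
    (hneg : ∀ z : Fin d → ℝ, (-(H * jac S z + (jac S z)ᵀ * H)).PosSemidef)
    (B : ℝ → Matrix (Fin n) (Fin d) ℝ)
    (lam : ℝ → ℝ) (hlam : Continuous lam) (hlam1 : ∀ t, 1 ≤ lam t)
    (x ξ : ℝ → Fin n → ℝ) (θ ν : ℝ → Fin d → ℝ)
    (hθ : ∀ t, HasDerivAt θ (S (θ t)) t)
    (hxξ : ∀ t, HasDerivAt (fun s => x s - ξ s)
      (-(lam t) • (x t - ξ t) + (B t).mulVec (θ t - ν t)) t)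
    (hν : ∀ t, HasDerivAt ν
      (S (ν t) + H⁻¹.mulVec ((B t)ᵀ.mulVec (x t - ξ t))) t) :
    (AntitoneOn
      (fun t => (1 / 2) * esq (x t - ξ t) +
        (1 / 2) * ((θ t - ν t) ⬝ᵥ H.mulVec (θ t - ν t))) (Ici (0 : ℝ))) ∧
    IntegrableOn (fun t => (Real.sqrt (lam t) * Real.sqrt (esq (x t - ξ t))) ^ 2)
      (Ici (0 : ℝ)) ∧
    IntegrableOn (fun t => esq (x t - ξ t)) (Ici (0 : ℝ)) := by
  set V := fun t => (1 / 2) * esq (x t - ξ t) + (1 / 2) * ((θ t - ν t) ⬝ᵥ H *ᵥ (θ t - ν t))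
  set f := fun t => lam t * esq (x t - ξ t)
  have hV : ∀ t, HasDerivAt V
      (-(lam t) * esq (x t - ξ t) + (θ t - ν t) ⬝ᵥ H *ᵥ (S (θ t) - S (ν t))) t := fun t =>
    hasDerivAt_lyapunov hHsymm (isUnit_iff_ne_zero.2 hHpos.det_pos.ne') (hxξ t)
      (by simpa only [sub_add_eq_sub_sub] using (hθ t).fun_sub (hν t))
  have hdecay : ∀ t,
      f t ≤ -(-(lam t) * esq (x t - ξ t) + (θ t - ν t) ⬝ᵥ H *ᵥ (S (θ t) - S (ν t))) := fun t => by
    linarith [sub_dotProduct_mulVec_map_sub_nonpos hHsymm (hS.differentiable one_ne_zero) hneg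
      (θ t) (ν t)]
  have hf0 : ∀ t, 0 ≤ f t := fun t => mul_nonneg (zero_le_one.trans (hlam1 t)) (esq_nonneg _)
  have hV0 : ∀ t, 0 ≤ V t := fun t => by
    have := hHpos.posSemidef.dotProduct_mulVec_nonneg (θ t - ν t)
    rw [star_trivial] at this
    simp only [V]
    linarith [esq_nonneg (x t - ξ t)]
  have hxξc : Continuous fun t => x t - ξ t :=
    continuous_iff_continuousAt.2 fun t => (hxξ t).continuousAt
  have hesq : Continuous fun t => esq (x t - ξ t) := by
    simpa only [esq_eq_dotProduct] using hxξc.dotProduct hxξc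
  have hf : IntegrableOn f (Ici 0) :=
    integrableOn_Ici_of_le_neg_deriv (fun t _ => hV t) (fun t _ => hV0 t)
      (hlam.mul hesq).continuousOn (fun t _ => hf0 t) (fun t _ => hdecay t)
  refine ⟨(antitone_of_hasDerivAt_nonpos hV fun t =>
    neg_nonneg.1 ((hf0 t).trans (hdecay t))).antitoneOn _, ?_, ?_⟩
  · convert hf using 2 with t
    rw [mul_pow, Real.sq_sqrt (zero_le_one.trans (hlam1 t)), Real.sq_sqrt (esq_nonneg _)]
  · refine hf.mono' hesq.aestronglyMeasurable (ae_of_all _ fun t => ?_)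
    rw [Real.norm_of_nonneg (esq_nonneg _)]
    exact le_mul_of_one_le_left (esq_nonneg _) (hlam1 t)

/-- embedding lemma estimate. V = (1/2)‖x−ξ‖² + (1/2)‖θ−ν‖²_H is
nonincreasing, √λ‖x−ξ‖ ∈ L², and x−ξ ∈ L². -/
theorem embedding_estimate {n d : ℕ}
    (H : Matrix (Fin d) (Fin d) ℝ) (hHsymm : H.IsSymm) (hHpos : H.PosDef)
    (S : (Fin d → ℝ) → (Fin d → ℝ)) (hS : ContDiff ℝ 1 S)
    (hneg : ∀ z : Fin d → ℝ, (-(H * jac S z + (jac S z)ᵀ * H)).PosSemidef)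
    (B : ℝ → Matrix (Fin n) (Fin d) ℝ) (hB : Continuous B)
    (lam : ℝ → ℝ) (hlam : Continuous lam) (hlam1 : ∀ t, 1 ≤ lam t)
    (x ξ : ℝ → Fin n → ℝ) (θ ν : ℝ → Fin d → ℝ)
    (hθ : ∀ t, HasDerivAt θ (S (θ t)) t)
    (hxξ : ∀ t, HasDerivAt (fun s => x s - ξ s)
      (-(lam t) • (x t - ξ t) + (B t).mulVec (θ t - ν t)) t)
    (hν : ∀ t, HasDerivAt ν
      (S (ν t) + H⁻¹.mulVec ((B t)ᵀ.mulVec (x t - ξ t))) t) :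
    (AntitoneOn
      (fun t => (1 / 2) * esq (x t - ξ t) +
        (1 / 2) * ((θ t - ν t) ⬝ᵥ H.mulVec (θ t - ν t))) (Ici (0 : ℝ))) ∧
    IntegrableOn (fun t => (Real.sqrt (lam t) * Real.sqrt (esq (x t - ξ t))) ^ 2)
      (Ici (0 : ℝ)) ∧
    IntegrableOn (fun t => esq (x t - ξ t)) (Ici (0 : ℝ)) :=
  embedding_estimate_general H hHsymm hHpos S hS hneg B lam hlam hlam1 x ξ θ ν hθ hxξ hν
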